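/- arXiv:1710.04884 — 4 statements merged into one kernel-verified Lean document; each statement's English description precedes it below -/
import Mathlib

section
/- For an integer K ≥ 2, the function h(x) = x² / (1 - (1-x)^K (1 + Kx)) is strictly monotonically increasing on the interval (0,1]. -/
/-!
Write `D(x) = 1 - (1 - x)^K (1 + K x)`. Then `D' = K (K + 1) x (1 - x)^(K - 1)`, so
`(x² / D)' = x F / D²` with `F = 2 D - x D'`. Since `F(0) = 0` and
`F' = (K + 1) K (K - 1) x² (1 - x)^(K - 2) > 0` on `(0, 1)`, `F` is positive there.
Finally `D > 0` on `(0, 1]` by Bernoulli's inequality: `(1 - x)^K (1 + K x) ≤ (1 - x²)^K < 1`.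
-/

open Set

noncomputable section

def ratioDenom (K : ℕ) (x : ℝ) : ℝ := 1 - (1 - x) ^ K * (1 + K * x)

lemma hasDerivAt_ratioDenom (K : ℕ) (x : ℝ) :
    HasDerivAt (ratioDenom K) (K * (K + 1) * x * (1 - x) ^ (K - 1)) x := by
  have h := (((hasDerivAt_id x).const_sub 1).fun_pow K).fun_mul
    (((hasDerivAt_id x).const_mul (K : ℝ)).const_add 1)
  refine (h.const_sub 1).congr_deriv ?_
  cases K with
  | zero => simp
  | succ n => simp only [id, Nat.add_sub_cancel]; push_cast; ring

lemma ratioDenom_pos {K : ℕ} (hK : K ≠ 0) {x : ℝ} (hx : x ∈ Ioc 0 1) :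
    0 < ratioDenom K x := by
  obtain ⟨hx0, hx1⟩ := hx
  have bernoulli : 1 + K * x ≤ (1 + x) ^ K := one_add_mul_le_pow (by linarith) K
  have h : (1 - x) ^ K * (1 + K * x) ≤ (1 - x ^ 2) ^ K :=
    calc (1 - x) ^ K * (1 + K * x) ≤ (1 - x) ^ K * (1 + x) ^ K := by gcongr
      _ = (1 - x ^ 2) ^ K := by rw [← mul_pow]; ring
  have : (1 - x ^ 2) ^ K < 1 := pow_lt_one₀ (by nlinarith) (by nlinarith) hK
  unfold ratioDenom
  linarith

def ratioDerivFactor (K : ℕ) (x : ℝ) : ℝ :=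
  2 * ratioDenom K x - K * (K + 1) * x ^ 2 * (1 - x) ^ (K - 1)

lemma hasDerivAt_ratioDerivFactor (K : ℕ) (x : ℝ) :
    HasDerivAt (ratioDerivFactor K) ((K + 1) * K * (K - 1) * x ^ 2 * (1 - x) ^ (K - 2)) x := by
  have h := ((hasDerivAt_pow 2 x).const_mul ((K : ℝ) * (K + 1))).fun_mul
    (((hasDerivAt_id x).const_sub 1).fun_pow (K - 1))
  refine (((hasDerivAt_ratioDenom K x).const_mul 2).sub h).congr_deriv ?_
  match K with
  | 0 => simp
  | 1 => norm_num
  | n + 2 => simp only [id, Nat.add_sub_cancel]; push_cast; ring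

lemma ratioDerivFactor_pos {K : ℕ} (hK : 2 ≤ K) {x : ℝ} (hx : x ∈ Ioo 0 1) :
    0 < ratioDerivFactor K x := by
  have hmono : StrictMonoOn (ratioDerivFactor K) (Icc 0 1) := by
    refine strictMonoOn_of_hasDerivWithinAt_pos (convex_Icc 0 1)
      (fun y _ ↦ (hasDerivAt_ratioDerivFactor K y).continuousAt.continuousWithinAt)
      (fun y _ ↦ (hasDerivAt_ratioDerivFactor K y).hasDerivWithinAt) ?_
    rw [interior_Icc]
    rintro y ⟨hy0, hy1⟩
    have : (1 : ℝ) < K := by exact_mod_cast hK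
    have : 0 < (1 - y) ^ (K - 2) := pow_pos (by linarith) _
    positivity
  have h0 : ratioDerivFactor K 0 = 0 := by simp [ratioDerivFactor, ratioDenom]
  simpa [h0] using hmono (left_mem_Icc.2 zero_le_one) (Ioo_subset_Icc_self hx) hx.1

end

theorem stmt_3 (K : ℕ) (hK : 2 ≤ K) :
    StrictMonoOn (fun x : ℝ => x ^ 2 / (1 - (1 - x) ^ K * (1 + K * x)))
      (Set.Ioc (0 : ℝ) 1) := by
  have hderiv : ∀ x ∈ Ioc (0 : ℝ) 1, HasDerivAt (fun x ↦ x ^ 2 / ratioDenom K x)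
      (x * ratioDerivFactor K x / ratioDenom K x ^ 2) x := fun x hx ↦
    ((hasDerivAt_pow 2 x).div (hasDerivAt_ratioDenom K x)
      (ratioDenom_pos (by omega) hx).ne').congr_deriv (by simp only [ratioDerivFactor]; ring)
  refine strictMonoOn_of_hasDerivWithinAt_pos (convex_Ioc 0 1)
    (fun x hx ↦ (hderiv x hx).continuousAt.continuousWithinAt)
    (fun x hx ↦ (hderiv x (interior_subset hx)).hasDerivWithinAt) ?_
  rw [interior_Ioc]
  intro x hx
  exact div_pos (mul_pos hx.1 (ratioDerivFactor_pos hK hx))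
    (pow_pos (ratioDenom_pos (by omega) (Ioo_subset_Ioc_self hx)) 2)
end

section
/- For an integer K ≥ 1, the function f with f(x) = ((1-x)/x)(1 - (1-x)^K) on (0,1] and f(0) = K is monotonically decreasing on [0,1]. -/
theorem stmt_8 (K : ℕ) (hK : 1 ≤ K) :
    AntitoneOn
      (fun x : ℝ => if x = 0 then (K : ℝ) else ((1 - x) / x) * (1 - (1 - x) ^ K))
      (Set.Icc (0 : ℝ) 1) := by
  have key : ∀ x : ℝ, x ∈ Set.Icc (0:ℝ) 1 →
      (if x = 0 then (K : ℝ) else ((1 - x) / x) * (1 - (1 - x) ^ K))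
        = ∑ j ∈ Finset.range K, (1 - x) ^ (j + 1) := by
    intro x _
    by_cases h : x = 0
    · simp [h]
    · rw [if_neg h]
      have hx1 : (1 - x) ≠ 1 := by
        intro h'; apply h; linarith
      have hsum : ∑ j ∈ Finset.range K, (1 - x) ^ (j + 1)
          = (1 - x) * ∑ j ∈ Finset.range K, (1 - x) ^ j := by
        rw [Finset.mul_sum]
        exact Finset.sum_congr rfl (fun j _ => by ring)
      rw [hsum, geom_sum_eq hx1]
      field_simp [h]
      ring
  intro a ha b hb hab
  simp only
  rw [key a ha, key b hb]
  apply Finset.sum_le_sum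
  intro j _
  exact pow_le_pow_left₀ (by linarith [hb.2]) (by linarith) _
end

section
/- For an integer K ≥ 1, the function f with f(x) = ((1-x)/x)(1 - (1-x)^K) on (0,1] and f(0) = K is convex on [0,1]. -/
/-!
For `x ≠ 0` the geometric sum gives `((1 - x) / x) * (1 - (1 - x) ^ K) = ∑_{j=1}^{K} (1 - x) ^ j`,
and at `x = 0` the right-hand side is `K`, so the function is this polynomial on all of `[0, 1]`.
Each `(1 - x) ^ j` is the convex function `y ↦ y ^ j` on `[0, ∞)` composed with the affine map
`x ↦ 1 - x`, hence convex on `x ≤ 1`, and a finite sum of convex functions is convex.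
-/

open Set

theorem ConvexOn.finset_sum {𝕜 E β ι : Type*} [Semiring 𝕜] [PartialOrder 𝕜] [AddCommMonoid E]
    [AddCommMonoid β] [PartialOrder β] [IsOrderedAddMonoid β] [SMul 𝕜 E] [Module 𝕜 β]
    {s : Set E} (hs : Convex 𝕜 s) {t : Finset ι} {f : ι → E → β}
    (hf : ∀ i ∈ t, ConvexOn 𝕜 s (f i)) : ConvexOn 𝕜 s fun x ↦ ∑ i ∈ t, f i x := by
  classical
  induction t using Finset.induction_on with
  | empty => simpa using convexOn_const (0 : β) hs
  | insert i t hi ih =>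
    simp_rw [Finset.sum_insert hi]
    exact (hf i (Finset.mem_insert_self i t)).add (ih fun j hj ↦ hf j (Finset.mem_insert_of_mem hj))

theorem convexOn_one_sub_pow {𝕜 : Type*} [Field 𝕜] [LinearOrder 𝕜] [IsStrictOrderedRing 𝕜]
    (n : ℕ) : ConvexOn 𝕜 (Iic 1) fun x : 𝕜 ↦ (1 - x) ^ n := by
  have h := (convexOn_pow (𝕜 := 𝕜) n).comp_affineMap (AffineMap.lineMap (k := 𝕜) (1 : 𝕜) 0)
  have hpre : AffineMap.lineMap (k := 𝕜) (1 : 𝕜) 0 ⁻¹' Ici 0 = Iic 1 := by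
    ext x
    simp [AffineMap.lineMap_apply]
  rw [hpre] at h
  refine h.congr fun x _ ↦ ?_
  simp [AffineMap.lineMap_apply, sub_eq_neg_add]

theorem sum_range_one_sub_pow_succ {𝕜 : Type*} [Field 𝕜] {x : 𝕜} (hx : x ≠ 0) (K : ℕ) :
    ∑ j ∈ Finset.range K, (1 - x) ^ (j + 1) = (1 - x) / x * (1 - (1 - x) ^ K) := by
  have hgeom := geom_sum_mul (1 - x) K
  simp_rw [pow_succ, ← Finset.sum_mul]
  field_simp
  linear_combination -(1 - x) * hgeom

theorem stmt_9_general (K : ℕ) :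
    ConvexOn ℝ (Set.Icc (0 : ℝ) 1)
      (fun x : ℝ => if x = 0 then (K : ℝ) else ((1 - x) / x) * (1 - (1 - x) ^ K)) := by
  have hsum : ConvexOn ℝ (Icc 0 1) fun x : ℝ ↦ ∑ j ∈ Finset.range K, (1 - x) ^ (j + 1) :=
    (ConvexOn.finset_sum (convex_Iic 1) fun j _ ↦ convexOn_one_sub_pow (j + 1)).subset
      Icc_subset_Iic_self (convex_Icc 0 1)
  refine hsum.congr fun x _ ↦ ?_
  split_ifs with hx
  · simp [hx]
  · exact sum_range_one_sub_pow_succ hx K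

theorem stmt_9 (K : ℕ) (hK : 1 ≤ K) :
    ConvexOn ℝ (Set.Icc (0 : ℝ) 1)
      (fun x : ℝ => if x = 0 then (K : ℝ) else ((1 - x) / x) * (1 - (1 - x) ^ K)) :=
  stmt_9_general K
end

section
/- Let K ≥ 2 be an integer and P ∈ (0,1]. The function f with f(x) = ((P - x)/x)(1 - (1-x)^K) for x ∈ (0,P] and f(0) = KP is strictly convex and monotonically decreasing on [0,P]. -/
/-!
Expanding the geometric sum, `f x = ∑_{i<K} (P - x) (1 - x)^i` for every `x`, including the
removable singularity `x = 0`. On `x ≤ P ≤ 1` each summand is a product of two nonnegative, convex,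
antitone functions, hence convex and antitone, and the summand `i = 1` is the strictly convex
quadratic `(P - x) (1 - x)`.
-/

open Set

theorem ConvexOn.sum {𝕜 E β ι : Type*} [Semiring 𝕜] [PartialOrder 𝕜] [AddCommMonoid E]
    [AddCommMonoid β] [PartialOrder β] [IsOrderedAddMonoid β] [SMul 𝕜 E] [Module 𝕜 β]
    {s : Set E} (hs : Convex 𝕜 s) {t : Finset ι} {f : ι → E → β}
    (hf : ∀ i ∈ t, ConvexOn 𝕜 s (f i)) : ConvexOn 𝕜 s fun x => ∑ i ∈ t, f i x := by
  classical
  induction t using Finset.induction_on with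
  | empty => simpa using convexOn_const (0 : β) hs
  | insert j t hj ih =>
    simp only [Finset.sum_insert hj]
    exact (hf j (t.mem_insert_self j)).add (ih fun i hi => hf i (Finset.mem_insert_of_mem hi))

theorem AntitoneOn.sum {α β ι : Type*} [Preorder α] [AddCommMonoid β] [PartialOrder β]
    [IsOrderedAddMonoid β] {s : Set α} {t : Finset ι} {f : ι → α → β}
    (hf : ∀ i ∈ t, AntitoneOn (f i) s) : AntitoneOn (fun x => ∑ i ∈ t, f i x) s :=
  fun _ hx _ hy hxy => Finset.sum_le_sum fun i hi => hf i hi hx hy hxy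

theorem strictConvexOn_sub_mul_sub (a b : ℝ) :
    StrictConvexOn ℝ univ fun x => (a - x) * (b - x) := by
  refine ⟨convex_univ, fun x _ y _ hxy u v hu hv huv => ?_⟩
  obtain rfl : v = 1 - u := by linarith
  have hxy' : 0 < (x - y) ^ 2 := by positivity [sub_ne_zero.2 hxy]
  simp only [smul_eq_mul]
  nlinarith [mul_pos (mul_pos hu hv) hxy']

theorem ite_div_mul_one_sub_pow_eq_sum (K : ℕ) (P : ℝ) :
    (fun x : ℝ => if x = 0 then (K : ℝ) * P else ((P - x) / x) * (1 - (1 - x) ^ K)) =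
      fun x => ∑ i ∈ Finset.range K, (P - x) * (1 - x) ^ i := by
  ext x
  rw [← Finset.mul_sum]
  split_ifs with hx
  · simp [hx, mul_comm]
  · rw [← geom_sum_mul_neg, sub_sub_cancel]
    field_simp

theorem antitoneOn_sub_mul_one_sub_pow {P : ℝ} (hP : P ≤ 1) (i : ℕ) :
    AntitoneOn (fun x => (P - x) * (1 - x) ^ i) (Iic P) := fun x hx y hy hxy => by
  rw [mem_Iic] at hx hy
  have h_pow : (1 - y) ^ i ≤ (1 - x) ^ i := pow_le_pow_left₀ (by linarith) (by linarith) i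
  exact mul_le_mul (by linarith) h_pow (by positivity [show 0 ≤ 1 - y by linarith]) (by linarith)

theorem convexOn_sub_mul_one_sub_pow {P : ℝ} (hP : P ≤ 1) (i : ℕ) :
    ConvexOn ℝ (Iic P) fun x => (P - x) * (1 - x) ^ i := by
  have h_sub (c : ℝ) : ConvexOn ℝ (Iic P) fun x => c - x :=
    (convexOn_const c (convex_Iic P)).sub (concaveOn_id (convex_Iic P))
  have h_sub_anti (c : ℝ) : AntitoneOn (fun x : ℝ => c - x) (Iic P) :=
    fun _ _ _ _ h => by linarith
  have h_one_sub_nonneg : ∀ x ∈ Iic P, 0 ≤ 1 - x := fun x hx => by linarith [mem_Iic.1 hx]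
  refine (h_sub P).mul ((h_sub 1).pow h_one_sub_nonneg i) (fun x hx => ?_)
    (fun x hx => pow_nonneg (h_one_sub_nonneg x hx) i)
    (((h_sub_anti P).monovaryOn (h_sub_anti 1)).pow_right₀ h_one_sub_nonneg i)
  linarith [mem_Iic.1 hx]

theorem strictConvexOn_sum_sub_mul_one_sub_pow {P : ℝ} (hP : P ≤ 1) {K : ℕ} (hK : 1 < K) :
    StrictConvexOn ℝ (Iic P) fun x => ∑ i ∈ Finset.range K, (P - x) * (1 - x) ^ i := by
  have h_one : 1 ∈ Finset.range K := Finset.mem_range.2 hK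
  simp_rw [← Finset.add_sum_erase _ _ h_one, pow_one]
  exact ((strictConvexOn_sub_mul_sub P 1).subset (subset_univ _) (convex_Iic P)).add_convexOn
    (ConvexOn.sum (convex_Iic P) fun i _ => convexOn_sub_mul_one_sub_pow hP i)

theorem stmt_16 (K : ℕ) (hK : 2 ≤ K) (P : ℝ) (hP : P ∈ Set.Ioc (0 : ℝ) 1) :
    StrictConvexOn ℝ (Set.Icc (0 : ℝ) P)
      (fun x : ℝ => if x = 0 then (K : ℝ) * P else ((P - x) / x) * (1 - (1 - x) ^ K))
    ∧ AntitoneOn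
        (fun x : ℝ => if x = 0 then (K : ℝ) * P else ((P - x) / x) * (1 - (1 - x) ^ K))
        (Set.Icc (0 : ℝ) P) := by
  rw [ite_div_mul_one_sub_pow_eq_sum]
  exact ⟨(strictConvexOn_sum_sub_mul_one_sub_pow hP.2 hK).subset Icc_subset_Iic_self
      (convex_Icc 0 P),
    (AntitoneOn.sum fun i _ => antitoneOn_sub_mul_one_sub_pow hP.2 i).mono Icc_subset_Iic_self⟩
end
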